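/- Let A and B be real m×n matrices. Then there exist matrices B₁, B₂ ∈ ℝ^{m×n} such that: (1) B = B₁ + B₂; (2) rank(B₁) ≤ 2·rank(A); (3) A·B₂' = 0 and A'·B₂ = 0; and (4) ⟨B₁, B₂⟩ = 0. -/

import Mathlib

/-!
Let `Q` and `P` be the orthogonal projections onto the column spaces of `A` and `Aᵀ`, and split
`B = B₁ + B₂` with `B₂ = (1 - Q) B (1 - P)` and `B₁ = Q B + (1 - Q) B P`. Since `Aᵀ (1 - Q) = 0`
and `A (1 - P) = 0`, both `Aᵀ B₂` and `A B₂ᵀ` vanish. The two summands of `B₁` factor through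
`Q` and `P`, whose ranks are at most `rank A = rank Aᵀ`. Finally `⟨Q B, B₂⟩ = 0` because
`Q (1 - Q) = 0`, and `⟨(1 - Q) B P, B₂⟩ = 0` because `P (1 - P) = 0` after cycling the trace.
-/

open Matrix WithLp

namespace Matrix

variable {m n R : Type*} [Fintype n]

theorem rank_add_le [Field R] (A B : Matrix m n R) : (A + B).rank ≤ A.rank + B.rank := by
  have h : LinearMap.range (A + B).mulVecLin ≤
      LinearMap.range A.mulVecLin ⊔ LinearMap.range B.mulVecLin := by
    rintro _ ⟨v, rfl⟩
    rw [mulVecLin_add]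
    exact Submodule.add_mem_sup (LinearMap.mem_range_self _ v) (LinearMap.mem_range_self _ v)
  exact (Submodule.finrank_mono h).trans (Submodule.finrank_add_le_finrank_add_finrank _ _)

section Trace

variable [Fintype m] [CommRing R]

theorem trace_transpose_mul_eq_zero_of_left {E F : Matrix m m R} (h : Eᵀ * F = 0)
    (X Y : Matrix m n R) : ((E * X)ᵀ * (F * Y)).trace = 0 := by
  rw [transpose_mul, Matrix.mul_assoc, ← Matrix.mul_assoc Eᵀ, h, Matrix.zero_mul,
    Matrix.mul_zero, trace_zero]

theorem trace_transpose_mul_eq_zero_of_right {E F : Matrix n n R} (h : E * Fᵀ = 0)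
    (X Y : Matrix m n R) : ((X * E)ᵀ * (Y * F)).trace = 0 := by
  have h' : F * Eᵀ = 0 := by rw [← transpose_transpose F, ← transpose_mul, h, transpose_zero]
  rw [transpose_mul, trace_mul_comm, Matrix.mul_assoc, ← Matrix.mul_assoc F, h', Matrix.zero_mul,
    Matrix.mul_zero, trace_zero]

variable [DecidableEq m] [DecidableEq n] {Q : Matrix m m R} {P : Matrix n n R}

theorem trace_transpose_mul_eq_zero_of_isIdempotentElem (hQt : Qᵀ = Q) (hQ : IsIdempotentElem Q)
    (hPt : Pᵀ = P) (hP : IsIdempotentElem P) (B : Matrix m n R) :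
    ((Q * B + (1 - Q) * B * P)ᵀ * ((1 - Q) * B * (1 - P))).trace = 0 := by
  have hQ' : Qᵀ * (1 - Q) = 0 := by rw [hQt, hQ.mul_one_sub_self]
  have hP' : P * (1 - P)ᵀ = 0 := by rw [transpose_sub, transpose_one, hPt, hP.mul_one_sub_self]
  have hQB : ((Q * B)ᵀ * ((1 - Q) * B * (1 - P))).trace = 0 := by
    rw [Matrix.mul_assoc (1 - Q)]
    exact trace_transpose_mul_eq_zero_of_left hQ' _ _
  rw [transpose_add, Matrix.add_mul, trace_add, hQB, trace_transpose_mul_eq_zero_of_right hP',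
    add_zero]

end Trace

section ColSpaceProj

variable [Fintype m] [DecidableEq m] (M : Matrix m n ℝ)

/-- The column space of `M`, seen in `EuclideanSpace` so that it has an orthogonal projection. -/
def euclideanColSpace : Submodule ℝ (EuclideanSpace ℝ m) :=
  (LinearMap.range M.mulVecLin).comap (WithLp.linearEquiv 2 ℝ (m → ℝ)).toLinearMap

noncomputable def colSpaceProj : Matrix m m ℝ :=
  (toEuclideanCLM (𝕜 := ℝ)).symm (euclideanColSpace M).starProjection

theorem isStarProjection_colSpaceProj : IsStarProjection (colSpaceProj M) :=
  isStarProjection_starProjection.map (toEuclideanCLM (𝕜 := ℝ) (n := m)).symm.toStarAlgHom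

theorem transpose_colSpaceProj : (colSpaceProj M)ᵀ = colSpaceProj M := by
  simpa [IsSelfAdjoint, star_eq_conjTranspose] using (isStarProjection_colSpaceProj M).isSelfAdjoint

theorem isIdempotentElem_colSpaceProj : IsIdempotentElem (colSpaceProj M) :=
  (isStarProjection_colSpaceProj M).isIdempotentElem

theorem colSpaceProj_mulVec (v : m → ℝ) :
    colSpaceProj M *ᵥ v = ofLp ((euclideanColSpace M).starProjection (toLp 2 v)) := by
  rw [← ofLp_toEuclideanCLM]; simp [colSpaceProj]

theorem colSpaceProj_mulVec_mem_range (v : m → ℝ) :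
    colSpaceProj M *ᵥ v ∈ LinearMap.range M.mulVecLin := by
  rw [colSpaceProj_mulVec]
  exact (euclideanColSpace M).starProjection_apply_mem _

theorem colSpaceProj_mul_self : colSpaceProj M * M = M := by
  classical
  refine ext_of_mulVec_single fun j => ?_
  have hcol : toLp 2 (M *ᵥ Pi.single j 1) ∈ euclideanColSpace M := ⟨Pi.single j 1, rfl⟩
  rw [← mulVec_mulVec, colSpaceProj_mulVec, Submodule.starProjection_eq_self_iff.mpr hcol]

theorem transpose_mul_one_sub_colSpaceProj : Mᵀ * (1 - colSpaceProj M) = 0 := by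
  have h := congrArg transpose (colSpaceProj_mul_self M)
  rw [transpose_mul, transpose_colSpaceProj] at h
  rw [Matrix.mul_sub, Matrix.mul_one, h, sub_self]

theorem rank_colSpaceProj_le : (colSpaceProj M).rank ≤ M.rank := by
  refine Submodule.finrank_mono ?_
  rintro _ ⟨v, rfl⟩
  exact colSpaceProj_mulVec_mem_range M v

end ColSpaceProj
end Matrix

/-- Decomposition lemma: any B can be split as B = B₁ + B₂ with rank B₁ ≤ 2 rank A,
A B₂ᵀ = 0, Aᵀ B₂ = 0 and ⟨B₁, B₂⟩ = Tr(B₁ᵀ B₂) = 0. -/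
theorem exists_rank_partition (m n : ℕ) (A B : Matrix (Fin m) (Fin n) ℝ) :
    ∃ B₁ B₂ : Matrix (Fin m) (Fin n) ℝ,
      B = B₁ + B₂ ∧ B₁.rank ≤ 2 * A.rank ∧
      A * B₂ᵀ = 0 ∧ Aᵀ * B₂ = 0 ∧ (B₁ᵀ * B₂).trace = 0 := by
  set Q := colSpaceProj A
  set P := colSpaceProj Aᵀ
  have hAP : A * (1 - P) = 0 := by
    simpa using transpose_mul_one_sub_colSpaceProj Aᵀ
  refine ⟨Q * B + (1 - Q) * B * P, (1 - Q) * B * (1 - P), ?_, ?_, ?_, ?_,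
    trace_transpose_mul_eq_zero_of_isIdempotentElem (transpose_colSpaceProj A)
      (isIdempotentElem_colSpaceProj A) (transpose_colSpaceProj Aᵀ)
      (isIdempotentElem_colSpaceProj Aᵀ) B⟩
  · rw [add_assoc, ← Matrix.mul_add, add_sub_cancel, Matrix.mul_one, ← Matrix.add_mul,
      add_sub_cancel, Matrix.one_mul]
  · calc (Q * B + (1 - Q) * B * P).rank ≤ (Q * B).rank + ((1 - Q) * B * P).rank :=
          rank_add_le _ _
      _ ≤ Q.rank + P.rank := add_le_add (rank_mul_le_left _ _) (rank_mul_le_right _ _)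
      _ ≤ A.rank + Aᵀ.rank := add_le_add (rank_colSpaceProj_le A) (rank_colSpaceProj_le Aᵀ)
      _ = 2 * A.rank := by rw [rank_transpose, two_mul]
  · rw [transpose_mul, transpose_mul, transpose_sub, transpose_one, transpose_colSpaceProj,
      ← Matrix.mul_assoc, ← Matrix.mul_assoc, hAP, Matrix.zero_mul, Matrix.zero_mul]
  · rw [← Matrix.mul_assoc, ← Matrix.mul_assoc, transpose_mul_one_sub_colSpaceProj,
      Matrix.zero_mul, Matrix.zero_mul]
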